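/- arXiv:2004.09229 — 2 statements merged into one kernel-verified Lean document; each statement's English description precedes it below -/
import Mathlib

section
/- Let M be a CG-lattice L-module, N ∈ M a proper element, and δ an expansion function on M. Then the following are equivalent: (1) N is a δ-primary element of M; (2) for every A ∈ M with A ≰ N, one has (N:A) ≤ (δ(N):I_M); (3) for every compact r ∈ L and compact A ∈ M, rA ≤ N implies A ≤ N or rI_M ≤ δ(N). -/
open CompleteLattice

universe u v

/-- A multiplicative lattice: a complete lattice with a commutative, associative
multiplication distributing over arbitrary joins, whose top element is the
multiplicative identity. -/
class MultiplicativeLattice (L : Type u) extends CompleteLattice L, CommMonoid L where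
  one_eq_top : (1 : L) = ⊤
  sSup_mul : ∀ (S : Set L) (b : L), sSup S * b = ⨆ a ∈ S, a * b

/-- A lattice module over a multiplicative lattice. -/
class LatticeModule (L : Type u) [MultiplicativeLattice L] (M : Type v)
    extends CompleteLattice M, SMul L M where
  sSup_smul : ∀ (S : Set L) (A : M), (SupSet.sSup S : L) • A = ⨆ a ∈ S, a • A
  smul_sSup : ∀ (a : L) (S : Set M), a • sSup S = ⨆ B ∈ S, a • B
  mul_smul : ∀ (a b : L) (A : M), (a * b) • A = a • b • A
  one_smul : ∀ A : M, (1 : L) • A = A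
  bot_smul : ∀ A : M, (⊥ : L) • A = (⊥ : M)

section LatticeDefs

variable {L : Type u} [MultiplicativeLattice L]

/-- The residual `(a : b)` in `L`. -/
def lColon (a b : L) : L := sSup {x : L | x * b ≤ a}

/-- The radical `√a` of an element of `L`. -/
def radL (a : L) : L :=
  sSup {x : L | IsCompactElement x ∧ ∃ n : ℕ, 1 ≤ n ∧ x ^ n ≤ a}

/-- A principal element of a multiplicative lattice (meet principal and join principal). -/
def IsPrincipalElemL (e : L) : Prop :=
  (∀ a b : L, a ⊓ b * e = (lColon a e ⊓ b) * e) ∧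
  (∀ a b : L, lColon (a * e ⊔ b) e = lColon b e ⊔ a)

/-- An expansion function on `L`. -/
def IsExpansionL (δ : L → L) : Prop :=
  (∀ a : L, a ≤ δ a) ∧ ∀ a b : L, a ≤ b → δ a ≤ δ b

/-- A 2-absorbing element of `L`. -/
def Is2AbsorbingL (q : L) : Prop :=
  q < ⊤ ∧ ∀ a b c : L, a * b * c ≤ q → a * b ≤ q ∨ b * c ≤ q ∨ c * a ≤ q

/-- A 2-absorbing primary element of `L`. -/
def Is2AbsorbingPrimaryL (q : L) : Prop :=
  q < ⊤ ∧ ∀ a b c : L, a * b * c ≤ q → a * b ≤ q ∨ b * c ≤ radL q ∨ c * a ≤ radL q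

/-- A `δL`-primary element of `L`. -/
def IsDeltaLPrimaryL (δL : L → L) (p : L) : Prop :=
  p < ⊤ ∧ ∀ a b : L, a * b ≤ p → a ≤ p ∨ b ≤ δL p

end LatticeDefs

/-- `L` is a PG-lattice: every element is a join of principal elements. -/
def IsPGLattice (L : Type u) [MultiplicativeLattice L] : Prop :=
  ∀ a : L, a = sSup {e : L | IsPrincipalElemL e ∧ e ≤ a}

section ModuleDefs

variable (L : Type u) {M : Type v} [MultiplicativeLattice L] [LatticeModule L M]

/-- The element `(A : B)` of `L`, for `A B : M`. -/
def mColon (A B : M) : L := sSup {x : L | x • B ≤ A}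

/-- The element `(N : a)` of `M`, for `N : M`, `a : L`. -/
def resColon (N : M) (a : L) : M := sSup {X : M | a • X ≤ N}

/-- An expansion function on the `L`-module `M`. -/
def IsExpansionM (δ : M → M) : Prop :=
  (∀ A : M, A ≤ δ A) ∧ ∀ A B : M, A ≤ B → δ A ≤ δ B

/-- A `δ`-primary element of the `L`-module `M`. -/
def IsDeltaPrimaryM (δ : M → M) (P : M) : Prop :=
  P < ⊤ ∧ ∀ (a : L) (A : M), a • A ≤ P → A ≤ P ∨ a • (⊤ : M) ≤ δ P

/-- A prime element of the `L`-module `M`. -/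
def IsPrimeM (P : M) : Prop :=
  P < ⊤ ∧ ∀ (a : L) (A : M), a • A ≤ P → A ≤ P ∨ a • (⊤ : M) ≤ P

/-- A primary element of the `L`-module `M`. -/
def IsPrimaryM (P : M) : Prop :=
  P < ⊤ ∧ ∀ (a : L) (A : M), a • A ≤ P → A ≤ P ∨ ∃ n : ℕ, 1 ≤ n ∧ a ^ n • (⊤ : M) ≤ P

/-- A principal element of the `L`-module `M` (meet principal and join principal). -/
def IsPrincipalElemM (N : M) : Prop :=
  (∀ (b : L) (B : M), (b ⊓ mColon L B N) • N = b • N ⊓ B) ∧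
  (∀ (b : L) (B : M), b ⊔ mColon L B N = mColon L (b • N ⊔ B) N)

/-- A maximal element of the `L`-module `M`. -/
def IsMaximalM (H : M) : Prop :=
  H < ⊤ ∧ ∀ B : M, H ≤ B → B = H ∨ B = ⊤

/-- A meet prime element of the `L`-module `M`. -/
def IsMeetPrimeM (N : M) : Prop :=
  N < ⊤ ∧ ∀ A B : M, A ⊓ B ≤ N → A ≤ N ∨ B ≤ N

/-- The expansion function `δ₁` on a multiplication `L`-module `M`:
`δ₁(A) = (√(A : I_M)) I_M`. -/
def delta1 (A : M) : M := radL (mColon L A (⊤ : M)) • (⊤ : M)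

/-- The expansion function `δ₂`: meet of all maximal elements above a proper element. -/
noncomputable def delta2 (A : M) : M := by
  classical exact if A = ⊤ then ⊤ else sInf {H : M | A ≤ H ∧ IsMaximalM L H}

/-- A 2-absorbing primary element of the `L`-module `M`. -/
def Is2AbsorbingPrimaryM (Q : M) : Prop :=
  Q < ⊤ ∧ ∀ (a b : L) (N : M), (a * b) • N ≤ Q →
    a * b ≤ mColon L Q (⊤ : M) ∨
    b • N ≤ radL (mColon L Q (⊤ : M)) • (⊤ : M) ∨
    a • N ≤ radL (mColon L Q (⊤ : M)) • (⊤ : M)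

/-- A `δL`-primary element of the `L`-module `M`, for an expansion function `δL` on `L`. -/
def IsDeltaLPrimaryM (δL : L → L) (P : M) : Prop :=
  P < ⊤ ∧ ∀ (a : L) (A : M), a • A ≤ P → A ≤ P ∨ a ≤ δL (mColon L P (⊤ : M))

end ModuleDefs

/-- `M` is a PG-lattice `L`-module: every element is a join of principal elements. -/
def IsPGModule (L : Type u) (M : Type v) [MultiplicativeLattice L] [LatticeModule L M] : Prop :=
  ∀ N : M, N = sSup {E : M | IsPrincipalElemM L E ∧ E ≤ N}

/-- `M` is a multiplication `L`-module. -/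
def IsMultiplicationModule (L : Type u) (M : Type v)
    [MultiplicativeLattice L] [LatticeModule L M] : Prop :=
  ∀ N : M, ∃ a : L, N = a • (⊤ : M)

/-- `M` is a faithful `L`-module: `(O_M : I_M) = 0`. -/
def IsFaithfulModule (L : Type u) (M : Type v)
    [MultiplicativeLattice L] [LatticeModule L M] : Prop :=
  mColon L (⊥ : M) (⊤ : M) = (⊥ : L)


section Helpers
variable {L : Type u} {M : Type v} [MultiplicativeLattice L] [LatticeModule L M]

lemma lm_smul_mono_left {a b : L} (A : M) (h : a ≤ b) : a • A ≤ b • A := by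
  have hb : b = sSup {a, b} := by simp [sSup_pair, sup_eq_right.mpr h]
  rw [hb, LatticeModule.sSup_smul]
  exact le_iSup₂_of_le a (by simp) le_rfl

lemma lm_smul_mono_right (a : L) {A B : M} (h : A ≤ B) : a • A ≤ a • B := by
  have hb : B = sSup {A, B} := by simp [sSup_pair, sup_eq_right.mpr h]
  rw [hb, LatticeModule.smul_sSup]
  exact le_iSup₂_of_le A (by simp) le_rfl

lemma mColon_smul_le (N A : M) : mColon L N A • A ≤ N := by
  rw [mColon, LatticeModule.sSup_smul]
  exact iSup₂_le fun x hx => hx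

lemma le_mColon {x : L} {N A : M} (h : x • A ≤ N) : x ≤ mColon L N A :=
  le_sSup h

end Helpers

theorem stmt2 {L : Type u} {M : Type v} [MultiplicativeLattice L] [LatticeModule L M]
    [IsCompactlyGenerated M]
    [IsCompactlyGenerated L]
    (h1cpt : IsCompactElement (1 : L))
    (hmulcpt : ∀ a b : L, IsCompactElement a → IsCompactElement b → IsCompactElement (a * b))
    (N : M) (hN : N < ⊤) (δ : M → M) (hδ : IsExpansionM L δ) :
    List.TFAE [IsDeltaPrimaryM L δ N,
      ∀ A : M, ¬ A ≤ N → mColon L N A ≤ mColon L (δ N) (⊤ : M),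
      ∀ (r : L) (A : M), IsCompactElement r → IsCompactElement A →
        r • A ≤ N → A ≤ N ∨ r • (⊤ : M) ≤ δ N] := by
  tfae_have 1 → 2 := by
    rintro ⟨-, hp⟩ A hA
    refine sSup_le fun x hx => le_mColon ?_
    rcases hp x A hx with h | h
    · exact absurd h hA
    · exact h
  tfae_have 2 → 3 := by
    intro h2 r A _ _ hrA
    by_cases hA : A ≤ N
    · exact Or.inl hA
    · refine Or.inr ?_
      have hr : r ≤ mColon L (δ N) (⊤ : M) := (h2 A hA).trans' (le_mColon hrA)
      exact (lm_smul_mono_left (⊤ : M) hr).trans (mColon_smul_le _ _)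
  tfae_have 3 → 1 := by
    intro h3
    refine ⟨hN, fun a A haA => ?_⟩
    by_cases hT : a • (⊤ : M) ≤ δ N
    · exact Or.inr hT
    · refine Or.inl ?_
      obtain ⟨r, ⟨hrc, hra⟩, hrT⟩ : ∃ r, (IsCompactElement r ∧ r ≤ a) ∧ ¬ r • (⊤ : M) ≤ δ N := by
        by_contra hcon
        push_neg at hcon
        apply hT
        have := sSup_compact_le_eq a
        calc a • (⊤ : M) = sSup {c : L | IsCompactElement c ∧ c ≤ a} • (⊤ : M) := by rw [this]
          _ = ⨆ c ∈ {c : L | IsCompactElement c ∧ c ≤ a}, c • (⊤ : M) :=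
              LatticeModule.sSup_smul _ _
          _ ≤ δ N := iSup₂_le fun c hc => hcon c hc
      calc A = sSup {B : M | IsCompactElement B ∧ B ≤ A} :=
            (sSup_compact_le_eq A).symm
        _ ≤ N := sSup_le fun B hB => by
            rcases h3 r B hrc hB.1 (((lm_smul_mono_right r hB.2).trans
              (lm_smul_mono_left A hra)).trans haA) with h | h
            · exact h
            · exact absurd h hrT
  tfae_finish
end

section
/- Let L be a PG-lattice and M a faithful multiplication PG-lattice L-module with I_M compact. If Q is a 2-absorbing primary element of M, then (Q:I_M) is a 2-absorbing primary element of L and √(Q:I_M) is a 2-absorbing element of L. -/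
open CompleteLattice

universe u v

/-! The heart of the proof is a cancellation law: in a faithful module whose top is a finite
join of principal elements, `b I_M ≤ a I_M` forces `b ≤ √a`. Join principality of one generator
`Y` turns `b (Y ∨ N) ≤ a (Y ∨ N)` into `b ≤ a ∨ w` with `b w N ≤ a N`, so induction on the
number of generators gives `b ≤ √(a ∨ (O_M : X))` for every generator `X`, and faithfulness
kills the product of these annihilators. Cancelling `I_M` in the defining property of `Q` shows
that `(Q : I_M)` is 2-absorbing primary. The radical `√q` of a 2-absorbing primary `q` is
2-absorbing because it suffices to test compact `a, b, c`, and for those `abc ≤ √q` means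
`aⁿbⁿcⁿ ≤ q`. -/

theorem isCompactElement_sup {α : Type*} [CompleteLattice α] {a b : α}
    (ha : IsCompactElement a) (hb : IsCompactElement b) : IsCompactElement (a ⊔ b) := by
  classical
  simpa using isCompactElement_finsetSup (f := id) {a, b} (by simp [ha, hb])

namespace MultiplicativeLattice

variable {L : Type u} [MultiplicativeLattice L]

theorem top_eq_one : (⊤ : L) = 1 := one_eq_top.symm

theorem le_one (a : L) : a ≤ 1 := top_eq_one (L := L) ▸ le_top

theorem sup_mul (a b c : L) : (a ⊔ b) * c = a * c ⊔ b * c := by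
  rw [← sSup_pair, sSup_mul, iSup_pair]

theorem mul_sup (a b c : L) : a * (b ⊔ c) = a * b ⊔ a * c := by
  simp only [mul_comm a, sup_mul]

instance : MulLeftMono L :=
  ⟨fun a b c h => by
    rw [← sup_eq_right.mpr h, mul_sup]
    exact le_sup_left⟩

theorem mul_le_left (a b : L) : a * b ≤ a := mul_le_of_le_one_right' (le_one b)

theorem mul_le_right (a b : L) : a * b ≤ b := mul_comm a b ▸ mul_le_left b a

theorem prod_le_of_mem {ι : Type*} {s : Finset ι} {i : ι} (hi : i ∈ s) (f : ι → L) :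
    ∏ j ∈ s, f j ≤ f i := by
  classical
  rw [← Finset.mul_prod_erase s f hi]
  exact mul_le_left _ _

theorem prod_sup_le {ι : Type*} (a : L) (s : Finset ι) (z : ι → L) :
    ∏ i ∈ s, (a ⊔ z i) ≤ a ⊔ ∏ i ∈ s, z i := by
  induction s using Finset.cons_induction with
  | empty => simp
  | cons i s hi ih =>
    rw [Finset.prod_cons, Finset.prod_cons]
    calc (a ⊔ z i) * ∏ j ∈ s, (a ⊔ z j) ≤ (a ⊔ z i) * (a ⊔ ∏ j ∈ s, z j) :=
          mul_le_mul_right ih _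
      _ = a * (a ⊔ ∏ j ∈ s, z j) ⊔ (z i * a ⊔ z i * ∏ j ∈ s, z j) := by
          rw [sup_mul, mul_sup (z i)]
      _ ≤ a ⊔ z i * ∏ j ∈ s, z j :=
          sup_le ((mul_le_left _ _).trans le_sup_left)
            (sup_le_sup_right (mul_le_right _ _) _)

theorem sup_pow_add_le (x y : L) (m n : ℕ) : (x ⊔ y) ^ (m + n) ≤ x ^ m ⊔ y ^ n := by
  induction m generalizing n with
  | zero => exact (le_one _).trans (pow_zero x ▸ le_sup_left)
  | succ m ihm =>
    induction n with
    | zero => exact (le_one _).trans (pow_zero y ▸ le_sup_right)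
    | succ n ihn =>
      calc (x ⊔ y) ^ (m + 1 + (n + 1))
          = x * (x ⊔ y) ^ (m + (n + 1)) ⊔ y * (x ⊔ y) ^ (m + 1 + n) := by
            rw [show m + (n + 1) = m + 1 + n by omega, ← sup_mul, ← pow_succ', ← add_assoc]
        _ ≤ x * (x ^ m ⊔ y ^ (n + 1)) ⊔ y * (x ^ (m + 1) ⊔ y ^ n) :=
          sup_le_sup (mul_le_mul_right (ihm _) _) (mul_le_mul_right ihn _)
        _ ≤ x ^ (m + 1) ⊔ y ^ (n + 1) := by
          rw [mul_sup, mul_sup, ← pow_succ', ← pow_succ']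
          exact sup_le (sup_le le_sup_left ((mul_le_right _ _).trans le_sup_right))
            (sup_le ((mul_le_right _ _).trans le_sup_left) le_sup_right)

theorem isCompactElement_pow
    (hmulcpt : ∀ a b : L, IsCompactElement a → IsCompactElement b → IsCompactElement (a * b))
    {x : L} (hx : IsCompactElement x) {n : ℕ} (hn : 1 ≤ n) : IsCompactElement (x ^ n) := by
  induction n, hn using Nat.le_induction with
  | base => rwa [pow_one]
  | succ n _ ih => rw [pow_succ]; exact hmulcpt _ _ ih hx

theorem radL_mono {a b : L} (h : a ≤ b) : radL a ≤ radL b :=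
  sSup_le_sSup fun _ ⟨hx, n, hn, hxn⟩ => ⟨hx, n, hn, hxn.trans h⟩

theorem compact_le_radL_iff {x u : L} (hx : IsCompactElement x) :
    x ≤ radL u ↔ ∃ n, 1 ≤ n ∧ x ^ n ≤ u := by
  refine ⟨fun h => ?_, fun ⟨n, hn, h⟩ => le_sSup ⟨hx, n, hn, h⟩⟩
  set S := {x : L | IsCompactElement x ∧ ∃ n, 1 ≤ n ∧ x ^ n ≤ u}
  have hbot : ⊥ ∈ S :=
    ⟨by simpa using isCompactElement_finsetSup (f := id) (∅ : Finset L) (by simp), 1, le_rfl,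
      by simp⟩
  have hdir : DirectedOn (· ≤ ·) S := by
    rintro y ⟨hy, m, hm, hym⟩ z ⟨hz, n, -, hzn⟩
    exact ⟨y ⊔ z, ⟨isCompactElement_sup hy hz, m + n, by omega,
      (sup_pow_add_le y z m n).trans (sup_le hym hzn)⟩, le_sup_left, le_sup_right⟩
  obtain ⟨y, ⟨-, n, hn, hyn⟩, hxy⟩ :=
    (isCompactElement_iff_le_of_directed_sSup_le L x).mp hx S ⟨⊥, hbot⟩ hdir h
  exact ⟨n, hn, (pow_le_pow_left' hxy n).trans hyn⟩

theorem radL_lt_top (h1cpt : IsCompactElement (1 : L)) {q : L} (hq : q < ⊤) : radL q < ⊤ := by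
  refine lt_top_iff_ne_top.mpr fun h => hq.ne (top_unique ?_)
  obtain ⟨n, -, hn⟩ := (compact_le_radL_iff h1cpt).mp (h ▸ le_top : (1 : L) ≤ radL q)
  rwa [one_pow, ← top_eq_one] at hn

variable [IsCompactlyGenerated L]

theorem le_radL (a : L) : a ≤ radL a :=
  le_iff_compact_le_imp.mpr fun x hx hxa => le_sSup ⟨hx, 1, le_rfl, by rwa [pow_one]⟩

theorem le_radL_of_pow_le
    (hmulcpt : ∀ a b : L, IsCompactElement a → IsCompactElement b → IsCompactElement (a * b))
    {b u : L} {n : ℕ} (hn : 1 ≤ n) (h : b ^ n ≤ radL u) : b ≤ radL u := by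
  refine le_iff_compact_le_imp.mpr fun x hx hxb => ?_
  obtain ⟨k, hk, hxk⟩ := (compact_le_radL_iff (isCompactElement_pow hmulcpt hx hn)).mp
    ((pow_le_pow_left' hxb n).trans h)
  exact le_sSup ⟨hx, n * k, Nat.one_le_iff_ne_zero.mpr (by positivity),
    (pow_mul x n k).le.trans hxk⟩

theorem radL_radL_le
    (hmulcpt : ∀ a b : L, IsCompactElement a → IsCompactElement b → IsCompactElement (a * b))
    (a : L) : radL (radL a) ≤ radL a :=
  sSup_le fun _ ⟨_, _, hn, h⟩ => le_radL_of_pow_le hmulcpt hn h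

theorem le_radL_mul {b c d : L} (hc : b ≤ radL c) (hd : b ≤ radL d) : b ≤ radL (c * d) := by
  refine le_iff_compact_le_imp.mpr fun x hx hxb => ?_
  obtain ⟨m, hm, hxm⟩ := (compact_le_radL_iff hx).mp (hxb.trans hc)
  obtain ⟨n, -, hxn⟩ := (compact_le_radL_iff hx).mp (hxb.trans hd)
  exact le_sSup ⟨hx, m + n, by omega, (pow_add x m n).le.trans (mul_le_mul' hxm hxn)⟩

theorem le_radL_prod {ι : Type*} {b : L} (s : Finset ι) (f : ι → L)
    (h : ∀ i ∈ s, b ≤ radL (f i)) :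
    b ≤ radL (∏ i ∈ s, f i) := by
  induction s using Finset.cons_induction with
  | empty => exact (le_one b).trans (le_radL _)
  | cons i s hi ih =>
    rw [Finset.prod_cons]
    exact le_radL_mul (h i (Finset.mem_cons_self i s))
      (ih fun j hj => h j (Finset.mem_cons_of_mem hj))

theorem exists_compact_mul_not_le {u v p : L} (h : ¬u * v ≤ p) :
    ∃ x y, IsCompactElement x ∧ IsCompactElement y ∧ x ≤ u ∧ y ≤ v ∧ ¬x * y ≤ p := by
  by_contra! hno
  obtain ⟨su, hsu, rfl⟩ := IsCompactlyGenerated.exists_sSup_eq u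
  obtain ⟨sv, hsv, rfl⟩ := IsCompactlyGenerated.exists_sSup_eq v
  refine h ?_
  rw [sSup_mul]
  refine iSup₂_le fun x hx => ?_
  rw [mul_comm, sSup_mul]
  refine iSup₂_le fun y hy => ?_
  rw [mul_comm]
  exact hno x y (hsu x hx) (hsv y hy) (le_sSup hx) (le_sSup hy)

theorem is2AbsorbingL_of_compact {p : L} (hp : p < ⊤)
    (h : ∀ a b c : L, IsCompactElement a → IsCompactElement b → IsCompactElement c →
      a * b * c ≤ p → a * b ≤ p ∨ b * c ≤ p ∨ c * a ≤ p) :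
    Is2AbsorbingL p := by
  refine ⟨hp, fun a b c habc => ?_⟩
  by_contra! hcon
  obtain ⟨hab, hbc, hca⟩ := hcon
  obtain ⟨x₀, y₀, hx₀, hy₀, hx₀a, hy₀b, hxy⟩ := exists_compact_mul_not_le hab
  obtain ⟨y₁, z₁, hy₁, hz₁, hy₁b, hz₁c, hyz⟩ := exists_compact_mul_not_le hbc
  obtain ⟨z₂, x₂, hz₂, hx₂, hz₂c, hx₂a, hzx⟩ := exists_compact_mul_not_le hca
  have hle : (x₀ ⊔ x₂) * (y₀ ⊔ y₁) * (z₁ ⊔ z₂) ≤ p :=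
    (mul_le_mul' (mul_le_mul' (sup_le hx₀a hx₂a) (sup_le hy₀b hy₁b)) (sup_le hz₁c hz₂c)).trans
      habc
  rcases h _ _ _ (isCompactElement_sup hx₀ hx₂) (isCompactElement_sup hy₀ hy₁)
      (isCompactElement_sup hz₁ hz₂) hle with h | h | h
  · exact hxy ((mul_le_mul' le_sup_left le_sup_left).trans h)
  · exact hyz ((mul_le_mul' le_sup_right le_sup_left).trans h)
  · exact hzx ((mul_le_mul' le_sup_right le_sup_right).trans h)

theorem _root_.Is2AbsorbingPrimaryL.is2AbsorbingL_radL (h1cpt : IsCompactElement (1 : L))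
    (hmulcpt : ∀ a b : L, IsCompactElement a → IsCompactElement b → IsCompactElement (a * b))
    {q : L} (hq : Is2AbsorbingPrimaryL q) : Is2AbsorbingL (radL q) := by
  refine is2AbsorbingL_of_compact (radL_lt_top h1cpt hq.1) fun a b c ha hb hc habc => ?_
  obtain ⟨n, hn, habcn⟩ := (compact_le_radL_iff (hmulcpt _ _ (hmulcpt _ _ ha hb) hc)).mp habc
  rw [mul_pow, mul_pow] at habcn
  rcases hq.2 _ _ _ habcn with h | h | h
  · exact Or.inl (le_radL_of_pow_le hmulcpt hn ((mul_pow a b n).trans_le (h.trans (le_radL q))))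
  · exact Or.inr (Or.inl (le_radL_of_pow_le hmulcpt hn ((mul_pow b c n).trans_le h)))
  · exact Or.inr (Or.inr (le_radL_of_pow_le hmulcpt hn ((mul_pow c a n).trans_le h)))

end MultiplicativeLattice

namespace LatticeModule

open MultiplicativeLattice

variable {L : Type u} {M : Type v} [MultiplicativeLattice L] [LatticeModule L M]

theorem sup_smul (a b : L) (A : M) : (a ⊔ b) • A = a • A ⊔ b • A := by
  rw [← sSup_pair, sSup_smul, iSup_pair]

theorem smul_sup (a : L) (A B : M) : a • (A ⊔ B) = a • A ⊔ a • B := by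
  rw [← sSup_pair, smul_sSup, iSup_pair]

theorem smul_le_smul {a b : L} {A B : M} (hab : a ≤ b) (hAB : A ≤ B) : a • A ≤ b • B :=
  calc a • A ≤ b • A := by rw [← sup_eq_right.mpr hab, sup_smul]; exact le_sup_left
    _ ≤ b • B := by rw [← sup_eq_right.mpr hAB, smul_sup]; exact le_sup_left

theorem smul_le_self (a : L) (A : M) : a • A ≤ A :=
  (smul_le_smul (le_one a) le_rfl).trans_eq (one_smul A)

theorem le_mColon_iff {x : L} {A B : M} : x ≤ mColon L A B ↔ x • B ≤ A := by
  refine ⟨fun h => (smul_le_smul h le_rfl).trans ?_, fun h => le_sSup h⟩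
  rw [mColon, sSup_smul]
  exact iSup₂_le fun _ hx => hx

theorem mColon_top_lt_top {Q : M} (hQ : Q < ⊤) : mColon L Q (⊤ : M) < ⊤ := by
  refine lt_top_iff_ne_top.mpr fun h => hQ.not_ge ?_
  rw [← one_smul (L := L) (⊤ : M), ← top_eq_one, ← h]
  exact le_mColon_iff.mp le_rfl

theorem prod_mColon_bot_le {ι : Type*} (s : Finset ι) (X : ι → M) :
    ∏ i ∈ s, mColon L (⊥ : M) (X i) ≤ mColon L (⊥ : M) (s.sup X) := by
  rw [le_mColon_iff, Finset.sup_eq_sSup_image, smul_sSup]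
  refine iSup₂_le ?_
  rintro _ ⟨i, hi, rfl⟩
  exact le_mColon_iff.mp (prod_le_of_mem hi _)

theorem _root_.IsPrincipalElemM.le_sup_mColon_of_smul_le {Y : M} (hY : IsPrincipalElemM L Y)
    {a b : L} {B : M}    (h : b • Y ≤ a • Y ⊔ B) : b ≤ a ⊔ mColon L B Y := by
  rw [hY.2]
  exact le_mColon_iff.mpr h

theorem _root_.IsPrincipalElemM.le_sup_mColon_and_smul_le {Y : M} (hY : IsPrincipalElemM L Y)
    {a b : L} {N : M}    (h : b • (Y ⊔ N) ≤ a • (Y ⊔ N)) :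
    b ≤ a ⊔ mColon L (a • N) Y ∧ (b * mColon L (a • N) Y) • N ≤ a • N := by
  set w := mColon L (a • N) Y
  rw [smul_sup, smul_sup] at h
  refine ⟨hY.le_sup_mColon_of_smul_le (le_sup_left.trans h), ?_⟩
  calc (b * w) • N = w • b • N := by rw [mul_comm, mul_smul]
    _ ≤ w • (a • Y ⊔ a • N) := smul_le_smul le_rfl (le_sup_right.trans h)
    _ = a • w • Y ⊔ w • a • N := by rw [smul_sup, ← mul_smul, mul_comm, mul_smul]
    _ ≤ a • N := sup_le ((smul_le_smul le_rfl (le_mColon_iff.mp le_rfl)).trans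
      ((mul_smul a a N).symm.trans_le (smul_le_smul (mul_le_left a a) le_rfl)))
      (smul_le_self w _)

variable [IsCompactlyGenerated L]

theorem _root_.IsPrincipalElemM.le_radL_sup_mColon_bot
    (hmulcpt : ∀ a b : L, IsCompactElement a → IsCompactElement b → IsCompactElement (a * b))
    {X : M} (hX : IsPrincipalElemM L X) (a : L) (t : Finset M)
    (ht : ∀ Y ∈ t, IsPrincipalElemM L Y) {b : L}
    (h : b • (X ⊔ t.sup id) ≤ a • (X ⊔ t.sup id)) : b ≤ radL (a ⊔ mColon L (⊥ : M) X) := by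
  induction t using Finset.cons_induction generalizing b with
  | empty =>
    rw [Finset.sup_empty, sup_bot_eq] at h
    exact (hX.le_sup_mColon_of_smul_le (h.trans_eq (sup_bot_eq _).symm)).trans (le_radL _)
  | cons Y t hY ih =>
    rw [Finset.sup_cons, id, sup_left_comm] at h
    obtain ⟨hbw, hw⟩ := (ht Y (Finset.mem_cons_self Y t)).le_sup_mColon_and_smul_le h
    have hbw_rad := ih (fun Z hZ => ht Z (Finset.mem_cons_of_mem hZ)) hw
    refine le_radL_of_pow_le hmulcpt (n := 2) (by norm_num) ?_
    calc b ^ 2 ≤ b * (a ⊔ mColon L (a • (X ⊔ t.sup id)) Y) := by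
          rw [sq]; exact mul_le_mul_right hbw b
      _ = b * a ⊔ b * mColon L (a • (X ⊔ t.sup id)) Y := mul_sup _ _ _
      _ ≤ radL (a ⊔ mColon L (⊥ : M) X) :=
          sup_le ((mul_le_right b a).trans (le_sup_left.trans (le_radL _))) hbw_rad

theorem le_radL_of_smul_top_le
    (hmulcpt : ∀ a b : L, IsCompactElement a → IsCompactElement b → IsCompactElement (a * b))
    (hPGM : IsPGModule L M) (hfaith : IsFaithfulModule L M) (htop : IsCompactElement (⊤ : M))
    {a b : L} (h : b • (⊤ : M) ≤ a • ⊤) : b ≤ radL a := by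
  obtain ⟨t, ht, htop_le⟩ :=
    (isCompactElement_iff_exists_le_sSup_of_le_sSup M ⊤).mp htop _ (hPGM ⊤).le
  have htop_eq : t.sup id = ⊤ := top_unique htop_le
  have hprin : ∀ X ∈ t, IsPrincipalElemM L X := fun X hX => (ht hX).1
  have hgen : ∀ X ∈ t, b ≤ radL (a ⊔ mColon L (⊥ : M) X) := by
    intro X hX
    classical
    have hsplit : X ⊔ (t.erase X).sup id = ⊤ := by
      rw [← htop_eq, ← Finset.insert_erase hX, Finset.sup_insert,
        Finset.erase_insert_eq_erase, Finset.erase_idem, id]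
    refine (hprin X hX).le_radL_sup_mColon_bot hmulcpt a (t.erase X)
      (fun Y hY => hprin Y (Finset.mem_of_mem_erase hY)) ?_
    rwa [hsplit]
  calc b ≤ radL (∏ X ∈ t, (a ⊔ mColon L (⊥ : M) X)) := le_radL_prod t _ hgen
    _ ≤ radL (a ⊔ ∏ X ∈ t, mColon L (⊥ : M) X) := radL_mono (prod_sup_le a t _)
    _ ≤ radL a := by
      refine radL_mono (sup_le le_rfl ((prod_mColon_bot_le t id).trans ?_))
      rw [htop_eq, hfaith]
      exact bot_le

end LatticeModule

theorem Is2AbsorbingPrimaryM.is2AbsorbingPrimaryL_mColon {L : Type u} {M : Type v}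
    [MultiplicativeLattice L] [LatticeModule L M] [IsCompactlyGenerated L]
    (hmulcpt : ∀ a b : L, IsCompactElement a → IsCompactElement b → IsCompactElement (a * b))
    (hPGM : IsPGModule L M) (hfaith : IsFaithfulModule L M) (htop : IsCompactElement (⊤ : M))
    {Q : M} (hQ : Is2AbsorbingPrimaryM L Q) : Is2AbsorbingPrimaryL (mColon L Q (⊤ : M)) := by
  set q := mColon L Q (⊤ : M)
  have hcancel : ∀ c : L, c • (⊤ : M) ≤ radL q • ⊤ → c ≤ radL q := fun c hc =>
    (LatticeModule.le_radL_of_smul_top_le hmulcpt hPGM hfaith htop hc).trans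
      (MultiplicativeLattice.radL_radL_le hmulcpt q)
  refine ⟨LatticeModule.mColon_top_lt_top hQ.1, fun a b c habc => ?_⟩
  have habc' : (a * b) • c • (⊤ : M) ≤ Q := by
    rw [← LatticeModule.mul_smul]
    exact LatticeModule.le_mColon_iff.mp habc
  rcases hQ.2 a b _ habc' with h | h | h
  · exact Or.inl h
  · exact Or.inr (Or.inl (hcancel _ (by rwa [LatticeModule.mul_smul])))
  · exact Or.inr (Or.inr (hcancel _ (by rwa [mul_comm, LatticeModule.mul_smul])))

theorem stmt14_general {L : Type u} {M : Type v} [MultiplicativeLattice L] [LatticeModule L M]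
    [IsCompactlyGenerated L]
    (h1cpt : IsCompactElement (1 : L))
    (hmulcpt : ∀ a b : L, IsCompactElement a → IsCompactElement b → IsCompactElement (a * b))
    (hPGM : IsPGModule L M)
    (hfaith : IsFaithfulModule L M)
    (htop : IsCompactElement (⊤ : M))
    (Q : M) (hQ : Is2AbsorbingPrimaryM L Q) :
    Is2AbsorbingPrimaryL (mColon L Q (⊤ : M)) ∧
    Is2AbsorbingL (radL (mColon L Q (⊤ : M))) := by
  have hq := hQ.is2AbsorbingPrimaryL_mColon hmulcpt hPGM hfaith htop
  exact ⟨hq, hq.is2AbsorbingL_radL h1cpt hmulcpt⟩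

theorem stmt14 {L : Type u} {M : Type v} [MultiplicativeLattice L] [LatticeModule L M]
    [IsCompactlyGenerated L]
    (h1cpt : IsCompactElement (1 : L))
    (hmulcpt : ∀ a b : L, IsCompactElement a → IsCompactElement b → IsCompactElement (a * b))
    (hPGL : IsPGLattice L) (hPGM : IsPGModule L M)
    (hmult : IsMultiplicationModule L M) (hfaith : IsFaithfulModule L M)
    (htop : IsCompactElement (⊤ : M))
    (Q : M) (hQ : Is2AbsorbingPrimaryM L Q) :
    Is2AbsorbingPrimaryL (mColon L Q (⊤ : M)) ∧
    Is2AbsorbingL (radL (mColon L Q (⊤ : M))) :=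
  stmt14_general h1cpt hmulcpt hPGM hfaith htop Q hQ
end
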